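/- arXiv:2311.03049 — 4 statements merged into one kernel-verified Lean document; each statement's English description precedes it below -/
import Mathlib

section
/- Refined Hakimi–Mitchem–Schmeichel inequality (even case): Let G be a finite simple graph that admits an acyclic proper vertex coloring with c colors, where c is an even natural number. Then the edge set of G can be partitioned into at most c − 1 forests; in other words, the arboricity of G is at most c − 1. -/
/-!
For even `c` the edges of the complete graph on the `c` colours split into `c - 1` perfect
matchings. Put an edge `uv` of `G` into the class of the matching containing `{f u, f v}`. Within
one class, an edge at a vertex of colour `i` leads to a vertex of the colour matched with `i`, so
each connected component of a class stays inside two colour classes of `f`, where `G` induces a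
forest.
-/

namespace SimpleGraph

variable {V : Type*} {G : SimpleGraph V}

lemma Walk.support_subset_of_adj_closed {s : Set V}
    (hs : ∀ ⦃x y⦄, G.Adj x y → x ∈ s → y ∈ s) :
    ∀ {u v : V} (p : G.Walk u v), u ∈ s → ∀ x ∈ p.support, x ∈ s
  | _, _, .nil, hu, x, hx => by rw [Walk.support_nil, List.mem_singleton] at hx; rwa [hx]
  | _, _, .cons h p, hu, x, hx => by
    rw [Walk.support_cons, List.mem_cons] at hx
    rcases hx with rfl | hx
    exacts [hu, p.support_subset_of_adj_closed hs (hs h hu) x hx]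

lemma Walk.IsCycle.induce {s : Set V} {u : V} {p : G.Walk u u} (hp : p.IsCycle)
    (hs : ∀ x ∈ p.support, x ∈ s) : (p.induce s hs).IsCycle := by
  rwa [← Walk.isCycle_map_iff_of_injective (f := (Embedding.induce s).toHom)
    Subtype.val_injective, Walk.map_induce]

lemma isAcyclic_of_forall_adj_exists_closed
    (h : ∀ u v, G.Adj u v → ∃ s : Set V,
      u ∈ s ∧ (∀ ⦃x y⦄, G.Adj x y → x ∈ s → y ∈ s) ∧ (G.induce s).IsAcyclic) :
    G.IsAcyclic := by
  rintro u (_ | ⟨huv, q⟩) hp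
  · exact hp.not_nil Walk.Nil.nil
  obtain ⟨s, hu, hs, hacyc⟩ := h _ _ huv
  exact hacyc _ (hp.induce (Walk.support_subset_of_adj_closed hs _ hu))

end SimpleGraph

open SimpleGraph

def IsProperEdgeColoringOfComplete {α β : Type*} (μ : Sym2 α → β) : Prop :=
  ∀ ⦃a b b' : α⦄, a ≠ b → a ≠ b' → μ s(a, b) = μ s(a, b') → b = b'

section ColorClass

variable {V α β : Type*} {G : SimpleGraph V} {f : V → α}

lemma isAcyclic_fromEdgeSet_colorClass (hproper : ∀ u v, G.Adj u v → f u ≠ f v)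
    (hacyclic : ∀ i j, i ≠ j → (G.induce {v | f v = i ∨ f v = j}).IsAcyclic)
    {μ : Sym2 α → β} (hμ : IsProperEdgeColoringOfComplete μ) (k : β) :
    (fromEdgeSet {e ∈ G.edgeSet | μ (e.map f) = k}).IsAcyclic := by
  refine isAcyclic_of_forall_adj_exists_closed fun u v huv => ?_
  obtain ⟨⟨huvG, huvk⟩, -⟩ := huv
  refine ⟨{x | f x = f u ∨ f x = f v}, Or.inl rfl, fun x y hxy hx => ?_, ?_⟩
  · obtain ⟨⟨hxyG, hxyk⟩, -⟩ := hxy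
    rw [Sym2.map_mk] at huvk hxyk
    have hfxy := hproper x y hxyG
    have hfuv := hproper u v huvG
    rcases hx with hx | hx <;> rw [hx] at hfxy hxyk
    · exact Or.inr (hμ hfxy hfuv (hxyk.trans huvk.symm))
    · rw [Sym2.eq_swap] at huvk
      exact Or.inl (hμ hfxy hfuv.symm (hxyk.trans huvk.symm))
  · exact (hacyclic _ _ (hproper u v huvG)).anti fun x y hxy => hxy.1.1

end ColorClass

lemma IsProperEdgeColoringOfComplete.comp_map {α α' β β' : Type*} {μ : Sym2 α → β}
    (hμ : IsProperEdgeColoringOfComplete μ) {g : α' → α} (hg : g.Injective)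
    {h : β → β'} (hh : h.Injective) :
    IsProperEdgeColoringOfComplete (h ∘ μ ∘ Sym2.map g) := fun _ _ _ hab hab' heq =>
  hg <| hμ (hg.ne hab) (hg.ne hab') (hh heq)

section RoundRobin

variable (n : ℕ)

def roundRobinColor : Option (ZMod n) → Option (ZMod n) → ZMod n
  | some a, some b => a + b
  | some a, none | none, some a => 2 * a
  | none, none => 0

/-- The classical one-factorization of `K_(n+1)` on `ZMod n ∪ {∞}`: the colour class of `x`
consists of `{x / 2, ∞}` and the pairs `{a, b}` with `a + b = x`. -/
def roundRobin : Sym2 (Option (ZMod n)) → ZMod n :=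
  Sym2.lift ⟨roundRobinColor n, by rintro (_ | _) (_ | _) <;> simp [roundRobinColor, add_comm]⟩

variable {n}

lemma isProperEdgeColoringOfComplete_roundRobin (hn : Odd n) :
    IsProperEdgeColoringOfComplete (roundRobin n) := by
  have h2 : IsUnit (2 : ZMod n) := by
    exact_mod_cast (ZMod.isUnit_iff_coprime 2 n).2 (Nat.coprime_two_left.2 hn)
  rintro (_ | _) (_ | _) (_ | _) hab hab' heq <;>
    simp only [roundRobin, Sym2.lift_mk, roundRobinColor] at heq ⊢
  · exact absurd rfl hab
  · exact absurd rfl hab'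
  · exact congrArg some (h2.mul_left_cancel heq)
  · exact absurd (congrArg some (by linear_combination heq)) hab'
  · exact absurd (congrArg some (by linear_combination -heq)) hab
  · rw [add_left_cancel heq]

end RoundRobin

lemma exists_isProperEdgeColoringOfComplete_fin {c : ℕ} (hc : Even c) :
    ∃ μ : Sym2 (Fin c) → Fin (c - 1), IsProperEdgeColoringOfComplete μ := by
  obtain rfl | ⟨n, rfl⟩ : c = 0 ∨ ∃ n, c = n + 1 := by cases c <;> simp
  · exact ⟨isEmptyElim, fun a => a.elim0⟩
  have hn : Odd n := by simpa [Nat.even_add_one] using hc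
  have : NeZero n := ⟨hn.pos.ne'⟩
  exact ⟨_, (isProperEdgeColoringOfComplete_roundRobin hn).comp_map
    (g := Option.map (ZMod.finEquiv n) ∘ finSuccEquiv n) (h := (ZMod.finEquiv n).symm)
    ((Option.map_injective (ZMod.finEquiv n).injective).comp (finSuccEquiv n).injective)
    (ZMod.finEquiv n).symm.injective⟩

theorem refined_HMS_even_general {V : Type*} (G : SimpleGraph V) (c : ℕ)
    (hc : Even c) (f : V → Fin c)
    (hproper : ∀ u v : V, G.Adj u v → f u ≠ f v)
    (hacyclic : ∀ i j : Fin c, i ≠ j →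
      (G.induce {v : V | f v = i ∨ f v = j}).IsAcyclic) :
    ∃ F : Fin (c - 1) → Set (Sym2 V),
      (∀ k, F k ⊆ G.edgeSet) ∧
      (∀ k, (SimpleGraph.fromEdgeSet (F k)).IsAcyclic) ∧
      (∀ k l, k ≠ l → Disjoint (F k) (F l)) ∧
      (⋃ k, F k) = G.edgeSet := by
  obtain ⟨μ, hμ⟩ := exists_isProperEdgeColoringOfComplete_fin hc
  refine ⟨fun k => {e ∈ G.edgeSet | μ (e.map f) = k}, fun k => Set.sep_subset _ _,
    isAcyclic_fromEdgeSet_colorClass hproper hacyclic hμ, fun k l hkl => ?_, ?_⟩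
  · exact Set.disjoint_left.2 fun e hk hl => hkl (hk.2.symm.trans hl.2)
  · exact Set.iUnion_subset (fun k => Set.sep_subset _ _) |>.antisymm
      fun e he => Set.mem_iUnion.2 ⟨_, he, rfl⟩

/-- Refined Hakimi–Mitchem–Schmeichel inequality (even case): if a finite simple graph
admits an acyclic proper vertex coloring with `c` colors and `c` is even, then its edge
set can be partitioned into at most `c - 1` forests. -/
theorem refined_HMS_even {V : Type*} [Fintype V] (G : SimpleGraph V) (c : ℕ)
    (hc : Even c) (f : V → Fin c)
    (hproper : ∀ u v : V, G.Adj u v → f u ≠ f v)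
    (hacyclic : ∀ i j : Fin c, i ≠ j →
      (G.induce {v : V | f v = i ∨ f v = j}).IsAcyclic) :
    ∃ F : Fin (c - 1) → Set (Sym2 V),
      (∀ k, F k ⊆ G.edgeSet) ∧
      (∀ k, (SimpleGraph.fromEdgeSet (F k)).IsAcyclic) ∧
      (∀ k l, k ≠ l → Disjoint (F k) (F l)) ∧
      (⋃ k, F k) = G.edgeSet :=
  refined_HMS_even_general G c hc f hproper hacyclic
end

section
/- Hakimi–Mitchem–Schmeichel inequality: Let G be a finite simple graph that admits an acyclic proper vertex coloring with c colors. Then the edge set of G can be partitioned into at most c forests; in other words, the arboricity of G is at most c. -/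
open SimpleGraph

/-- Transport a walk of `G` whose support lies in `S` to a walk of `G.induce S`. -/
private def inducedWalk {V : Type*} {G : SimpleGraph V} {S : Set V} :
    ∀ {u w : V} (p : G.Walk u w) (hS : ∀ x ∈ p.support, x ∈ S),
      (G.induce S).Walk ⟨u, hS u p.start_mem_support⟩ ⟨w, hS w p.end_mem_support⟩
  | _, _, SimpleGraph.Walk.nil, _ => SimpleGraph.Walk.nil
  | _, _, SimpleGraph.Walk.cons h p, hS =>
      SimpleGraph.Walk.cons (by exact h)
        (inducedWalk p (fun x hx => hS x (by simp [hx])))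

private theorem inducedWalk_map {V : Type*} {G : SimpleGraph V} {S : Set V} :
    ∀ {u w : V} (p : G.Walk u w) (hS : ∀ x ∈ p.support, x ∈ S),
      ((inducedWalk p hS).map (SimpleGraph.Embedding.induce S).toHom) = p
  | _, _, SimpleGraph.Walk.nil, _ => rfl
  | _, _, SimpleGraph.Walk.cons h p, hS => by
      simp only [inducedWalk, SimpleGraph.Walk.map_cons]
      exact congrArg _ (inducedWalk_map p _)

/-- Hakimi–Mitchem–Schmeichel inequality: if a finite simple graph admits an acyclic
proper vertex coloring with `c` colors, then its edge set can be partitioned into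
at most `c` forests. -/
theorem HMS_inequality {V : Type*} [Fintype V] (G : SimpleGraph V) (c : ℕ)
    (f : V → Fin c)
    (hproper : ∀ u v : V, G.Adj u v → f u ≠ f v)
    (hacyclic : ∀ i j : Fin c, i ≠ j →
      (G.induce {v : V | f v = i ∨ f v = j}).IsAcyclic) :
    ∃ F : Fin c → Set (Sym2 V),
      (∀ k, F k ⊆ G.edgeSet) ∧
      (∀ k, (SimpleGraph.fromEdgeSet (F k)).IsAcyclic) ∧
      (∀ k l, k ≠ l → Disjoint (F k) (F l)) ∧
      (⋃ k, F k) = G.edgeSet := by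
  classical
  -- color of a vertex in `ZMod c`
  let g : V → ZMod c := fun v => ((f v : ℕ) : ZMod c)
  have hginj : ∀ u v : V, g u = g v → f u = f v := by
    intro u v huv
    haveI : NeZero c := ⟨(f u).pos.ne'⟩
    have h1 := ZMod.val_cast_of_lt (f u).isLt
    have h2 := ZMod.val_cast_of_lt (f v).isLt
    have h3 : ((f u : ℕ) : ZMod c).val = ((f v : ℕ) : ZMod c).val := by
      show (g u).val = (g v).val; rw [huv]
    exact Fin.ext (by rw [← h1, ← h2, h3])
  -- the sum of endpoint colors of an edge
  let s : Sym2 V → ZMod c := Sym2.lift ⟨fun u w => g u + g w, fun u w => add_comm _ _⟩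
  refine ⟨fun k => {e ∈ G.edgeSet | s e = ((k : ℕ) : ZMod c)}, ?_, ?_, ?_, ?_⟩
  · intro k e he; exact he.1
  · -- each class is a forest
    intro k
    haveI : NeZero c := ⟨k.pos.ne'⟩
    set H := SimpleGraph.fromEdgeSet {e ∈ G.edgeSet | s e = ((k : ℕ) : ZMod c)} with hH
    intro v p hp
    have hHG : H ≤ G :=
      le_trans (SimpleGraph.fromEdgeSet_mono (fun e he => he.1))
        (le_of_eq (SimpleGraph.fromEdgeSet_edgeSet G))
    have hadj : ∀ u w : V, H.Adj u w → g u + g w = ((k : ℕ) : ZMod c) := by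
      intro u w huw
      rw [hH, SimpleGraph.fromEdgeSet_adj] at huw
      exact huw.1.2
    -- all vertices on a walk of H carry one of two colors
    have hwalk : ∀ {u w : V} (q : H.Walk u w), ∀ x ∈ q.support,
        g x = g u ∨ g x + g u = ((k : ℕ) : ZMod c) := by
      intro u w q
      induction q with
      | nil => intro x hx; simp at hx; subst hx; exact Or.inl rfl
      | @cons a b w h q ih =>
        intro x hx
        rw [SimpleGraph.Walk.support_cons, List.mem_cons] at hx
        rcases hx with rfl | hx
        · exact Or.inl rfl
        · have hab := hadj a b h
          rcases ih x hx with h1 | h1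
          · right; rw [h1, ← hab]; ring
          · left
            have : g x = ((k : ℕ) : ZMod c) - g b := by rw [← h1]; ring
            rw [this, ← hab]; ring
    -- the second vertex of the cycle
    have hnn : ¬ p.Nil := hp.not_nil
    have hvw : H.Adj v (p.getVert 1) := SimpleGraph.Walk.adj_snd hnn
    set w₀ := p.getVert 1 with hw₀
    have hne : f v ≠ f w₀ := hproper _ _ (hHG hvw)
    have hsum : g v + g w₀ = ((k : ℕ) : ZMod c) := hadj _ _ hvw
    set S : Set V := {x | f x = f v ∨ f x = f w₀} with hS
    have hsupp : ∀ x ∈ p.support, x ∈ S := by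
      intro x hx
      rcases hwalk p x hx with h1 | h1
      · exact Or.inl (hginj _ _ h1)
      · refine Or.inr (hginj _ _ ?_)
        have hx' : g x = ((k : ℕ) : ZMod c) - g v := by rw [← h1]; ring
        have hw' : g w₀ = ((k : ℕ) : ZMod c) - g v := by rw [← hsum]; ring
        rw [hx', hw']
    -- transfer the cycle into G
    have hedges : ∀ e ∈ p.edges, e ∈ G.edgeSet := by
      intro e he
      exact SimpleGraph.edgeSet_mono hHG (p.edges_subset_edgeSet he)
    let p' : G.Walk v v := p.transfer G hedges
    have hp' : p'.IsCycle := hp.transfer hedges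
    have hsupp' : ∀ x ∈ p'.support, x ∈ S := by
      intro x hx
      rw [SimpleGraph.Walk.support_transfer] at hx
      exact hsupp x hx
    -- move into the induced subgraph
    let q := inducedWalk p' hsupp'
    have hq : (q.map (SimpleGraph.Embedding.induce S).toHom).IsCycle := by
      rw [inducedWalk_map]; exact hp'
    have hqc : q.IsCycle :=
      ((SimpleGraph.Walk.map_isCycle_iff_of_injective Subtype.val_injective).mp hq)
    exact hacyclic (f v) (f w₀) hne q hqc
  · -- disjointness
    intro k l hkl
    rw [Set.disjoint_left]
    rintro e ⟨_, hek⟩ ⟨_, hel⟩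
    haveI : NeZero c := ⟨k.pos.ne'⟩
    apply hkl
    have : (((k : ℕ) : ZMod c)).val = (((l : ℕ) : ZMod c)).val := by rw [← hek, hel]
    rw [ZMod.val_cast_of_lt k.isLt, ZMod.val_cast_of_lt l.isLt] at this
    exact Fin.ext this
  · -- union is the edge set
    apply Set.Subset.antisymm
    · exact Set.iUnion_subset fun k e he => he.1
    · intro e he
      induction e with
      | h u w =>
        haveI : NeZero c := ⟨(f u).pos.ne'⟩
        refine Set.mem_iUnion.mpr ⟨⟨(s s(u, w)).val, (s s(u, w)).val_lt⟩, he, ?_⟩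
        exact (ZMod.natCast_rightInverse _).symm
end

section
/- The octahedron needs 5 acyclic colors: the octahedron graph (the complete tripartite graph K₂,₂,₂ on 6 vertices) admits no acyclic proper vertex coloring with 4 colors, but it admits an acyclic proper vertex coloring with 5 colors; hence its acyclic chromatic number equals 5. -/
/-!
In a proper colouring of `K₂,₂,₂` the three pairs use pairwise disjoint sets of colours, so
with four colours at least two pairs are monochromatic, and those two pairs span a `4`-cycle in
just two colours. Conversely, colour one pair with a single colour and give the other four vertices
their own colours: any two colour classes then cover at most three vertices, and their induced
subgraph, being bipartite, is triangle-free and hence acyclic.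
-/

/-- The octahedron graph `K₂,₂,₂`: vertices are `Fin 3 × Fin 2` (three pairs of
vertices), and two vertices are adjacent iff they lie in different pairs. -/
def octahedron : SimpleGraph (Fin 3 × Fin 2) :=
  SimpleGraph.fromRel (fun a b => a.1 ≠ b.1)

/-- An acyclic proper vertex coloring of `G` with `c` colors: adjacent vertices get
different colors, and any two color classes together induce a forest. -/
def IsAcyclicColoring {V : Type*} (G : SimpleGraph V) {c : ℕ} (f : V → Fin c) : Prop :=
  (∀ u v : V, G.Adj u v → f u ≠ f v) ∧
  ∀ i j : Fin c, i ≠ j → (G.induce {v : V | f v = i ∨ f v = j}).IsAcyclic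

open Finset SimpleGraph

theorem card_add_card_bichromatic_le {α γ : Type*} [Fintype α] [Fintype γ] [DecidableEq γ]
    (f : α × Fin 2 → γ) (hf : ∀ a b i j, a ≠ b → f (a, i) ≠ f (b, j)) :
    Fintype.card α + #{a | f (a, 0) ≠ f (a, 1)} ≤ Fintype.card γ := by
  have hpair (x y : γ) : #{x, y} = 1 + if x ≠ y then 1 else 0 := by
    by_cases h : x = y <;> simp [h]
  calc Fintype.card α + #{a | f (a, 0) ≠ f (a, 1)}
      = ∑ a, #{f (a, 0), f (a, 1)} := by
        simp [hpair, sum_add_distrib, card_filter]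
    _ = #(univ.biUnion fun a => {f (a, 0), f (a, 1)}) := by
        rw [card_biUnion]
        intro a _ b _ hab
        simp [Finset.disjoint_left, hf a b _ _ hab]
    _ ≤ Fintype.card γ := card_le_univ _

theorem exists_two_monochromatic_pairs {f : Fin 3 × Fin 2 → Fin 4}
    (hf : ∀ a b i j, a ≠ b → f (a, i) ≠ f (b, j)) :
    ∃ a b, a ≠ b ∧ f (a, 0) = f (a, 1) ∧ f (b, 0) = f (b, 1) := by
  have hle := card_add_card_bichromatic_le f hf
  have hsplit := card_filter_add_card_filter_not (s := univ) fun a : Fin 3 => f (a, 0) = f (a, 1)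
  simp only [Fintype.card_fin, card_univ, ne_eq] at hle hsplit
  obtain ⟨a, ha, b, hb, hab⟩ := one_lt_card.mp (by omega : 1 < #{a | f (a, 0) = f (a, 1)})
  exact ⟨a, b, hab, (mem_filter.mp ha).2, (mem_filter.mp hb).2⟩

theorem SimpleGraph.not_isAcyclic_of_cycle4 {V : Type*} {G : SimpleGraph V} {a b c d : V}
    (hab : G.Adj a b) (hbc : G.Adj b c) (hcd : G.Adj c d) (hda : G.Adj d a)
    (hac : a ≠ c) (hbd : b ≠ d) : ¬ G.IsAcyclic := fun hG => by
  let p : G.Path a c := ⟨.cons hab (.cons hbc .nil), by simp [hab.ne, hac, hbc.ne]⟩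
  let q : G.Path a c := ⟨.cons hda.symm (.cons hcd.symm .nil), by simp [hda.ne', hac, hcd.ne']⟩
  have hpq := congrArg Subtype.val ((hG.subsingleton_path a c).elim p q)
  simp only [p, q, Walk.cons.injEq] at hpq
  exact hbd hpq.1

theorem SimpleGraph.isAcyclic_of_card_le_three {V : Type*} [Fintype V] {G : SimpleGraph V}
    (hV : Fintype.card V ≤ 3) (hG : G.CliqueFree 3) : G.IsAcyclic := by
  classical
  intro v c hc
  have hlen : c.length = 3 := by
    have := hc.isPath_tail.length_lt
    have := c.length_tail_add_one hc.not_nil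
    have := hc.three_le_length
    omega
  match c, hlen with
  | .cons h₁ (.cons h₂ (.cons h₃ .nil)), _ =>
    exact hG _ (is3Clique_triple_iff.mpr ⟨h₁, h₃.symm, h₂⟩)

theorem SimpleGraph.cliqueFree_three_induce_two_colors {V : Type*} {G : SimpleGraph V} {c : ℕ}
    {f : V → Fin c} (hf : ∀ u v, G.Adj u v → f u ≠ f v) (i j : Fin c) :
    (G.induce {v | f v = i ∨ f v = j}).CliqueFree 3 := by
  classical
  let C : (G.induce {v | f v = i ∨ f v = j}).Coloring Bool :=
    Coloring.mk (fun v => decide (f v = i)) fun {u v} h => by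
      have := hf _ _ h
      rcases u.2 with hu | hu <;> rcases v.2 with hv | hv <;> simp_all [eq_comm]
  exact C.colorable.cliqueFree (by simp)

theorem octahedron_adj {u v : Fin 3 × Fin 2} : octahedron.Adj u v ↔ u.1 ≠ v.1 := by
  rw [octahedron, fromRel_adj]
  exact ⟨fun ⟨_, h⟩ => h.elim id Ne.symm,
    fun h => ⟨fun huv => h (congrArg Prod.fst huv), .inl h⟩⟩

theorem not_isAcyclicColoring_octahedron (f : Fin 3 × Fin 2 → Fin 4) :
    ¬ IsAcyclicColoring octahedron f := by
  rintro ⟨hproper, hacyclic⟩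
  have hf (a b i j) (h : a ≠ b) : f (a, i) ≠ f (b, j) := hproper _ _ (octahedron_adj.mpr h)
  obtain ⟨a, b, hab, ha, hb⟩ := exists_two_monochromatic_pairs hf
  refine not_isAcyclic_of_cycle4 (a := ⟨(a, 0), .inl rfl⟩) (b := ⟨(b, 0), .inr rfl⟩)
    (c := ⟨(a, 1), .inl ha.symm⟩) (d := ⟨(b, 1), .inr hb.symm⟩) ?_ ?_ ?_ ?_ ?_ ?_
    (hacyclic (f (a, 0)) (f (b, 0)) (hf a b 0 0 hab)) <;>
    simp [octahedron_adj, hab, hab.symm]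

def octahedronColoring : Fin 3 × Fin 2 → Fin 5
  | (0, _) => 0
  | (1, 0) => 1
  | (1, 1) => 2
  | (2, 0) => 3
  | (2, 1) => 4

theorem card_two_colorClasses_octahedronColoring_le (i j : Fin 5) (hij : i ≠ j) :
    Fintype.card {v | octahedronColoring v = i ∨ octahedronColoring v = j} ≤ 3 := by
  revert i j; decide

theorem isAcyclicColoring_octahedronColoring :
    IsAcyclicColoring octahedron octahedronColoring := by
  have hproper (u v) (h : octahedron.Adj u v) : octahedronColoring u ≠ octahedronColoring v := by
    rw [octahedron_adj] at h
    revert u v; decide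
  exact ⟨hproper, fun i j hij => isAcyclic_of_card_le_three
    (card_two_colorClasses_octahedronColoring_le i j hij)
    (cliqueFree_three_induce_two_colors hproper i j)⟩

/-- The octahedron needs 5 acyclic colors: it admits no acyclic proper coloring with
`4` colors, but admits one with `5` colors. -/
theorem acyclicChromatic_octahedron :
    (∀ f : Fin 3 × Fin 2 → Fin 4, ¬ IsAcyclicColoring octahedron f) ∧
    (∃ f : Fin 3 × Fin 2 → Fin 5, IsAcyclicColoring octahedron f) :=
  ⟨not_isAcyclicColoring_octahedron, octahedronColoring, isAcyclicColoring_octahedronColoring⟩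
end

section
/- Every forest decomposes into two star forests: let G be a finite simple graph whose edge set contains no cycle (G is a forest). Then the edge set of G can be partitioned into two sets F₁ and F₂ such that each Fᵢ is a star forest, i.e., each Fᵢ is acyclic and every connected component of the spanning subgraph with edge set Fᵢ has a vertex incident to all edges of that component. -/
/-- `F` is a star forest (as an edge set): the spanning subgraph with edge set `F` is
acyclic, and every connected component of it has a vertex incident to all edges of
that component. -/
def IsStarForest {V : Type*} (F : Set (Sym2 V)) : Prop :=
  (SimpleGraph.fromEdgeSet F).IsAcyclic ∧
  ∀ v : V, ∃ c : V, ∀ e ∈ F,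
    (∃ x ∈ e, (SimpleGraph.fromEdgeSet F).Reachable v x) → c ∈ e

namespace StarForestAux

open SimpleGraph Walk

variable {V : Type*} (G : SimpleGraph V)

/-- A choice of root in every connected component. -/
noncomputable def root (v : V) : V := (G.connectedComponentMk v).out

lemma reachable_root (v : V) : G.Reachable (root G v) v :=
  SimpleGraph.ConnectedComponent.exact (Quot.out_eq (G.connectedComponentMk v))

/-- The chosen path from the root to `v`. -/
noncomputable def thePath (v : V) : G.Path (root G v) v :=
  letI := Classical.decEq V
  (reachable_root G v).some.toPath

/-- Depth of a vertex: length of the chosen path from the root. -/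
noncomputable def d (v : V) : ℕ := (thePath G v).1.length

variable {G}

lemma root_eq_of_adj {u v : V} (h : G.Adj u v) : root G u = root G v :=
  congrArg Quot.out (SimpleGraph.ConnectedComponent.sound h.reachable)

lemma isPath_concat {u v w : V} {p : G.Walk u v} (hp : p.IsPath) (h : G.Adj v w)
    (hw : w ∉ p.support) : (p.concat h).IsPath := by
  rw [← Walk.isPath_reverse_iff, Walk.reverse_concat]
  exact hp.reverse.cons (by simpa [Walk.support_reverse] using hw)

/-- Dichotomy: along an edge one endpoint is the parent of the other. -/
lemma dichotomy (hG : G.IsAcyclic) {u v : V} (h : G.Adj u v) :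
    (thePath G v).1.copy (root_eq_of_adj h).symm rfl = (thePath G u).1.concat h ∨
    (thePath G u).1 = ((thePath G v).1.copy (root_eq_of_adj h).symm rfl).concat h.symm := by
  classical
  set p : G.Walk (root G u) u := (thePath G u).1 with hp_def
  have hp : p.IsPath := (thePath G u).2
  set q : G.Walk (root G u) v := (thePath G v).1.copy (root_eq_of_adj h).symm rfl with hq_def
  have hq : q.IsPath := by
    rw [hq_def, Walk.isPath_copy]
    exact (thePath G v).2
  by_cases hv : v ∈ p.support
  · right
    have hdrop : p.dropUntil v hv = Walk.cons h.symm Walk.nil := by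
      have h1 : (⟨p.dropUntil v hv, hp.dropUntil hv⟩ : G.Path v u) =
          ⟨Walk.cons h.symm Walk.nil, by simp [h.ne']⟩ := hG.path_unique _ _
      exact congrArg Subtype.val h1
    have htake : q = p.takeUntil v hv := by
      have h1 : (⟨q, hq⟩ : G.Path (root G u) v) = ⟨p.takeUntil v hv, hp.takeUntil hv⟩ :=
        hG.path_unique _ _
      exact congrArg Subtype.val h1
    rw [htake, Walk.concat_eq_append, ← hdrop, Walk.take_spec]
  · left
    have hcp : (p.concat h).IsPath := isPath_concat hp h hv
    have h1 : (⟨q, hq⟩ : G.Path (root G u) v) = ⟨p.concat h, hcp⟩ := hG.path_unique _ _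
    exact congrArg Subtype.val h1

/-- Each edge changes depth by exactly one. -/
lemma key (hG : G.IsAcyclic) {u v : V} (h : G.Adj u v) :
    d G v = d G u + 1 ∨ d G u = d G v + 1 := by
  rcases dichotomy hG h with h1 | h1 <;>
    [left; right] <;>
  · apply_fun Walk.length at h1
    simpa [d, Walk.length_copy, Walk.length_concat] using h1

lemma concat_eq (hG : G.IsAcyclic) {u v : V} (h : G.Adj u v) (hd : d G v = d G u + 1) :
    (thePath G v).1.copy (root_eq_of_adj h).symm rfl = (thePath G u).1.concat h := by
  rcases dichotomy hG h with h1 | h1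
  · exact h1
  · exfalso
    apply_fun Walk.length at h1
    simp only [Walk.length_copy, Walk.length_concat] at h1
    unfold d at hd
    omega

lemma concat_copy_inj {r1 r2 r : V} {u w x : V} (e1 : r1 = r) (e2 : r2 = r)
    {p : G.Walk r1 u} {q : G.Walk r2 w} {h : G.Adj u x} {h' : G.Adj w x}
    (heq : (p.concat h).copy e1 rfl = (q.concat h').copy e2 rfl) : u = w := by
  subst e1; subst e2
  simp only [Walk.copy_rfl_rfl] at heq
  exact (Walk.concat_inj heq).choose

/-- Parents are unique. -/
lemma parent_unique (hG : G.IsAcyclic) {u w v : V} (hu : G.Adj u v) (hw : G.Adj w v)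
    (hdu : d G v = d G u + 1) (hdw : d G v = d G w + 1) : u = w := by
  have e1 := concat_eq hG hu hdu
  have e2 := concat_eq hG hw hdw
  have e1' : (thePath G v).1 = ((thePath G u).1.concat hu).copy (root_eq_of_adj hu) rfl := by
    rw [← e1]; simp [Walk.copy_copy]
  have e2' : (thePath G v).1 = ((thePath G w).1.concat hw).copy (root_eq_of_adj hw) rfl := by
    rw [← e2]; simp [Walk.copy_copy]
  exact concat_copy_inj (root_eq_of_adj hu) (root_eq_of_adj hw) (e1'.symm.trans e2')

variable (G) in
/-- The edges whose parent endpoint has depth satisfying `P`. -/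
def side (P : ℕ → Prop) : Set (Sym2 V) :=
  {e | ∃ u v : V, e = s(u, v) ∧ G.Adj u v ∧ d G v = d G u + 1 ∧ P (d G u)}

lemma side_subset {P : ℕ → Prop} : side G P ⊆ G.edgeSet := by
  rintro e ⟨u, v, rfl, h, -, -⟩
  exact h

lemma adj_side {P : ℕ → Prop} {x y : V}
    (hxy : (SimpleGraph.fromEdgeSet (side G P)).Adj x y) :
    G.Adj x y ∧
      ((d G y = d G x + 1 ∧ P (d G x)) ∨ (d G x = d G y + 1 ∧ P (d G y))) := by
  rw [SimpleGraph.fromEdgeSet_adj] at hxy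
  obtain ⟨⟨u, v, he, hadj, hd, hP⟩, -⟩ := hxy
  rcases Sym2.eq_iff.mp he with ⟨rfl, rfl⟩ | ⟨rfl, rfl⟩
  · exact ⟨hadj, Or.inl ⟨hd, hP⟩⟩
  · exact ⟨hadj.symm, Or.inr ⟨hd, hP⟩⟩

lemma isStarForest_side (hG : G.IsAcyclic) (P : ℕ → Prop)
    (hP : ∀ n, P n → P (n + 1) → False) : IsStarForest (side G P) := by
  set H := SimpleGraph.fromEdgeSet (side G P) with hH
  have hle : H ≤ G := by
    calc H ≤ SimpleGraph.fromEdgeSet G.edgeSet := SimpleGraph.fromEdgeSet_mono side_subset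
    _ = G := SimpleGraph.fromEdgeSet_edgeSet G
  constructor
  · intro v c hc
    exact hG (c.mapLe hle) (hc.mapLe hle)
  · intro v
    -- child-unique claim
    have childU : ∀ {x y z : V}, H.Adj x y → P (d G x) → d G y = d G x + 1 →
        H.Adj y z → z = x := by
      intro x y z hxy hPx hdy hyz
      obtain ⟨hgyz, hor⟩ := adj_side hyz
      rcases hor with ⟨hd1, hP1⟩ | ⟨hd1, hP1⟩
      · exact absurd hP1 (fun h1 => hP _ hPx (hdy ▸ h1))
      · exact parent_unique hG hgyz.symm ((adj_side hxy).1) hd1 hdy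
    by_cases hv : ∃ y, H.Adj v y
    · obtain ⟨y, hvy⟩ := hv
      obtain ⟨hgvy, hor⟩ := adj_side hvy
      -- choose the center c
      obtain ⟨c, hc⟩ : ∃ c : V, (v = c ∨ (H.Adj c v ∧ d G v = d G c + 1)) ∧ P (d G c) := by
        rcases hor with ⟨hd1, hP1⟩ | ⟨hd1, hP1⟩
        · exact ⟨v, Or.inl rfl, hP1⟩
        · exact ⟨y, Or.inr ⟨hvy.symm, hd1⟩, hP1⟩
      refine ⟨c, ?_⟩
      have claimC : ∀ {a b : V} (w : H.Walk a b),
          (a = c ∨ (H.Adj c a ∧ d G a = d G c + 1)) →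
          (b = c ∨ (H.Adj c b ∧ d G b = d G c + 1)) := by
        intro a b w
        induction w with
        | nil => exact id
        | @cons a a' b h' w ih =>
          intro ha
          apply ih
          rcases ha with rfl | ⟨hca, hda⟩
          · obtain ⟨-, hor'⟩ := adj_side h'
            rcases hor' with ⟨hd1, hP1⟩ | ⟨hd1, hP1⟩
            · exact Or.inr ⟨h', hd1⟩
            · exact absurd hc.2 (fun h1 => hP _ hP1 (hd1 ▸ h1))
          · exact Or.inl (childU hca hc.2 hda h')
      rintro e ⟨u, w, rfl, hadj, hd, hPw⟩ ⟨x, hx, hr⟩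
      obtain ⟨wk⟩ := hr
      have hx' : x = c ∨ (H.Adj c x ∧ d G x = d G c + 1) := by
        apply claimC wk
        rcases hc.1 with h1 | h1
        · exact Or.inl h1
        · exact Or.inr h1
      rcases hx' with rfl | ⟨hcx, hdx⟩
      · exact hx
      · rcases Sym2.mem_iff.mp hx with rfl | rfl
        · exact absurd hPw (fun h1 => hP _ hc.2 (hdx ▸ h1))
        · have hcu : c = u := parent_unique hG (hle hcx) hadj hdx hd
          rw [hcu]
          exact Sym2.mem_mk_left u x
    · refine ⟨v, ?_⟩
      rintro e he ⟨x, hx, hr⟩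
      obtain ⟨wk⟩ := hr
      cases wk with
      | nil => exact hx
      | cons h' _ => exact absurd ⟨_, h'⟩ hv

end StarForestAux

open StarForestAux in
/-- Every forest decomposes into two star forests: if a finite simple graph `G` is
acyclic, then its edge set can be partitioned into two star forests. -/
theorem forest_eq_union_two_star_forests {V : Type*} [Fintype V]
    (G : SimpleGraph V) (hG : G.IsAcyclic) :
    ∃ F₁ F₂ : Set (Sym2 V),
      F₁ ⊆ G.edgeSet ∧ F₂ ⊆ G.edgeSet ∧
      Disjoint F₁ F₂ ∧ F₁ ∪ F₂ = G.edgeSet ∧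
      IsStarForest F₁ ∧ IsStarForest F₂ := by
  refine ⟨side G (fun n => Even n), side G (fun n => Odd n), side_subset, side_subset, ?_, ?_, ?_, ?_⟩
  · rw [Set.disjoint_left]
    rintro e ⟨u, v, rfl, hadj, hd, hPe⟩ ⟨a, b, he, hadj', hd', hPo⟩
    rcases Sym2.eq_iff.mp he with ⟨rfl, rfl⟩ | ⟨rfl, rfl⟩
    · rw [Nat.even_iff] at hPe
      rw [Nat.odd_iff] at hPo
      omega
    · omega
  · apply Set.Subset.antisymm
    · exact Set.union_subset side_subset side_subset
    · intro e he
      induction e using Sym2.ind with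
      | _ u v =>
        rw [SimpleGraph.mem_edgeSet] at he
        rcases key hG he with hd | hd
        · rcases Nat.even_or_odd (d G u) with hp | hp
          · exact Or.inl ⟨u, v, rfl, he, hd, hp⟩
          · exact Or.inr ⟨u, v, rfl, he, hd, hp⟩
        · rcases Nat.even_or_odd (d G v) with hp | hp
          · exact Or.inl ⟨v, u, Sym2.eq_swap.symm, he.symm, hd, hp⟩
          · exact Or.inr ⟨v, u, Sym2.eq_swap.symm, he.symm, hd, hp⟩
  · exact isStarForest_side hG _ (fun n h1 h2 => (Nat.even_add_one.mp h2) h1)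
  · exact isStarForest_side hG _ (fun n h1 h2 => by
      rw [Nat.odd_iff] at h1 h2; omega)
end
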